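/- Let K be a finite simplicial complex and g : V(K) → ℝ. If every vertex of K except exactly one (say v₀, with minimal g-value) is descending dominated, then the strong internal core of g is a single point; in particular, K is homotopy equivalent to a point (K strong collapses to the vertex v₀). -/
import Mathlib


open Finset

variable {V : Type*}

/-- A finite abstract simplicial complex: a finite family of nonempty finite sets
closed under taking nonempty subsets. -/
def IsComplex [DecidableEq V] (K : Finset (Finset V)) : Prop :=
  (∀ σ ∈ K, σ.Nonempty) ∧ ∀ σ ∈ K, ∀ τ, τ ⊆ σ → τ.Nonempty → τ ∈ K

/-- The link of a vertex `v` in `K`. -/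
def link [DecidableEq V] (K : Finset (Finset V)) (v : V) : Finset (Finset V) :=
  K.filter (fun σ => v ∉ σ ∧ insert v σ ∈ K)

/-- `v` is dominated by `a` in `K`: the link of `v` is a simplicial cone with apex `a`. -/
def Dominated [DecidableEq V] (K : Finset (Finset V)) (v a : V) : Prop :=
  a ≠ v ∧ ({a} : Finset V) ∈ link K v ∧ ∀ σ ∈ link K v, insert a σ ∈ link K v

/-- `K ∖ v`: the subcomplex of simplices not containing `v`. -/
def deleteVertex [DecidableEq V] (K : Finset (Finset V)) (v : V) : Finset (Finset V) :=
  K.filter (fun σ => v ∉ σ)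

/-- Sublevel complex: full subcomplex spanned by vertices of `g`-value at most `α`. -/
noncomputable def sublevel [DecidableEq V] (K : Finset (Finset V)) (g : V → ℝ) (α : ℝ) :
    Finset (Finset V) :=
  K.filter (fun σ => ∀ w ∈ σ, g w ≤ α)

/-- `v` is descending dominated: dominated in the sublevel complex `K_{g v}`
by a vertex `a` with `g a < g v`. Otherwise `v` is strong critical. -/
def DescDom [DecidableEq V] (K : Finset (Finset V)) (g : V → ℝ) (v : V) : Prop :=
  ∃ a, g a < g v ∧ Dominated (sublevel K g (g v)) v a

/-- Elementary strong collapse: removal of a dominated vertex with its open star. -/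
def ElemSC [DecidableEq V] (K L : Finset (Finset V)) : Prop :=
  ∃ v a, ({v} : Finset V) ∈ K ∧ Dominated K v a ∧ L = deleteVertex K v

/-- Geometric realization of `K` inside `V → ℝ`: convex combinations of vertices
supported on a simplex of `K`. -/
def realization [Fintype V] [DecidableEq V] (K : Finset (Finset V)) : Set (V → ℝ) :=
  {f | (∀ v, 0 ≤ f v) ∧ (∑ v, f v) = 1 ∧
    (Finset.univ.filter (fun v => f v ≠ 0)) ∈ K}

/-- `A` is a strong deformation retract of `X`. -/
def IsStrongDefRetract {X : Type*} [TopologicalSpace X] (A : Set X) : Prop :=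
  ∃ r : C(X, X), (∀ x, r x ∈ A) ∧ Nonempty ((ContinuousMap.id X).HomotopyRel r A)

section mainaux
variable [DecidableEq V]

variable [DecidableEq V]

lemma mem_link_iff {K : Finset (Finset V)} {v : V} {σ : Finset V} :
    σ ∈ link K v ↔ σ ∈ K ∧ v ∉ σ ∧ insert v σ ∈ K := by
  simp [link]

lemma mem_deleteVertex_iff {K : Finset (Finset V)} {v : V} {σ : Finset V} :
    σ ∈ deleteVertex K v ↔ σ ∈ K ∧ v ∉ σ := by
  simp [deleteVertex]

lemma isComplex_deleteVertex {K : Finset (Finset V)} (hK : IsComplex K) (v : V) :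
    IsComplex (deleteVertex K v) := by
  constructor
  · intro σ hσ; exact hK.1 σ (mem_deleteVertex_iff.1 hσ).1
  · intro σ hσ τ hτ hne
    rw [mem_deleteVertex_iff] at hσ ⊢
    exact ⟨hK.2 σ hσ.1 τ hτ hne, fun hv => hσ.2 (hτ hv)⟩

lemma dominated_deleteVertex {S : Finset (Finset V)} {w b v : V}
    (h : Dominated S w b) (hvw : v ≠ w) (hvb : v ≠ b) :
    Dominated (deleteVertex S v) w b := by
  obtain ⟨hbw, hb, hcone⟩ := h
  rw [mem_link_iff] at hb
  refine ⟨hbw, ?_, ?_⟩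
  · rw [mem_link_iff, mem_deleteVertex_iff, mem_deleteVertex_iff]
    refine ⟨⟨hb.1, ?_⟩, hb.2.1, hb.2.2, ?_⟩ <;> simp [hvw, hvb]
  · intro σ hσ
    rw [mem_link_iff, mem_deleteVertex_iff, mem_deleteVertex_iff] at hσ
    have hσS : σ ∈ link S w := mem_link_iff.2 ⟨hσ.1.1, hσ.2.1, hσ.2.2.1⟩
    have hvσ : v ∉ σ := hσ.1.2
    have h2 := hcone σ hσS
    rw [mem_link_iff] at h2
    rw [mem_link_iff, mem_deleteVertex_iff, mem_deleteVertex_iff]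
    have hvins : v ∉ insert b σ := by
      simp only [Finset.mem_insert]; rintro (h | h); exact hvb h; exact hvσ h
    refine ⟨⟨h2.1, hvins⟩, h2.2.1, h2.2.2, ?_⟩
    rw [Finset.mem_insert]
    rintro (h | h)
    · exact hvw h
    · exact hvins h

lemma sublevel_deleteVertex {K : Finset (Finset V)} {g : V → ℝ} {α : ℝ} {v : V} :
    sublevel (deleteVertex K v) g α = deleteVertex (sublevel K g α) v := by
  simp [sublevel, deleteVertex, Finset.filter_comm]

lemma deleteVertex_sublevel_of_lt {K : Finset (Finset V)} {g : V → ℝ} {α : ℝ} {v : V}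
    (hα : α < g v) : deleteVertex (sublevel K g α) v = sublevel K g α := by
  apply Finset.filter_true_of_mem
  intro σ hσ hv
  have := (Finset.mem_filter.1 hσ).2 v hv
  linarith

lemma sublevel_eq_self {K : Finset (Finset V)} {g : V → ℝ} {α : ℝ}
    (h : ∀ σ ∈ K, ∀ w ∈ σ, g w ≤ α) : sublevel K g α = K :=
  Finset.filter_true_of_mem h

lemma vertex_mem {K : Finset (Finset V)} (hK : IsComplex K) {σ : Finset V}
    (hσ : σ ∈ K) {w : V} (hw : w ∈ σ) : ({w} : Finset V) ∈ K :=
  hK.2 σ hσ {w} (Finset.singleton_subset_iff.2 hw) ⟨w, Finset.mem_singleton_self w⟩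

/-- Part 1 core: strong induction. -/
lemma collapse_aux [Fintype V] (g : V → ℝ) (v₀ : V) :
    ∀ n (K : Finset (Finset V)), K.card ≤ n → IsComplex K → ({v₀} : Finset V) ∈ K →
    (∀ w, ({w} : Finset V) ∈ K → g v₀ ≤ g w) →
    (∀ v, ({v} : Finset V) ∈ K → v ≠ v₀ → DescDom K g v) →
    Relation.ReflTransGen (ElemSC (V := V)) K {({v₀} : Finset V)} := by
  intro n
  induction n with
  | zero => intro K hc hK hv₀ _ _
            exact absurd (Finset.card_pos.2 ⟨_, hv₀⟩) (by omega)
  | succ n ih =>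
    intro K hc hK hv₀ hmin hdom
    by_cases hall : ∀ σ ∈ K, σ = ({v₀} : Finset V)
    · have : K = {({v₀} : Finset V)} := by
        apply Finset.eq_singleton_iff_unique_mem.2 ⟨hv₀, hall⟩
      rw [this]
    · push_neg at hall
      obtain ⟨σ, hσ, hσne⟩ := hall
      -- there is a vertex ≠ v₀
      have hu : ∃ u, ({u} : Finset V) ∈ K ∧ u ≠ v₀ := by
        by_contra h
        push_neg at h
        apply hσne
        have hsub : σ ⊆ {v₀} := by
          intro w hw
          have := h w (vertex_mem hK hσ hw)
          simp [this]
        obtain ⟨x, hx⟩ := hK.1 σ hσ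
        have hx0 : x = v₀ := Finset.mem_singleton.1 (hsub hx)
        apply Finset.Subset.antisymm hsub
        simpa [← hx0] using hx
      -- pick vertex ≠ v₀ with max g
      set s : Finset V := Finset.univ.filter (fun w => ({w} : Finset V) ∈ K ∧ w ≠ v₀) with hs
      have hsne : s.Nonempty := by
        obtain ⟨u, hu1, hu2⟩ := hu
        exact ⟨u, by simp [hs, hu1, hu2]⟩
      obtain ⟨v, hvs, hvmax⟩ := Finset.exists_max_image s g hsne
      simp only [hs, Finset.mem_filter] at hvs
      obtain ⟨-, hvK, hvv₀⟩ := hvs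
      -- g v is the max over all vertices
      have hmax : ∀ τ ∈ K, ∀ w ∈ τ, g w ≤ g v := by
        intro τ hτ w hw
        have hwK := vertex_mem hK hτ hw
        by_cases hw0 : w = v₀
        · subst hw0; exact hmin v hvK
        · exact hvmax w (by simp [hs, hwK, hw0])
      have hsl : sublevel K g (g v) = K := sublevel_eq_self hmax
      obtain ⟨a, hga, hda⟩ := hdom v hvK hvv₀
      rw [hsl] at hda
      have hstep : ElemSC K (deleteVertex K v) := ⟨v, a, hvK, hda, rfl⟩
      have hcard : (deleteVertex K v).card ≤ n := by
        have hsub : deleteVertex K v ⊆ K := Finset.filter_subset _ _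
        have hne : ({v} : Finset V) ∉ deleteVertex K v := by
          simp [mem_deleteVertex_iff]
        have : (deleteVertex K v).card < K.card :=
          Finset.card_lt_card (Finset.ssubset_iff_of_subset hsub |>.2 ⟨_, hvK, hne⟩)
        omega
      refine Relation.ReflTransGen.head hstep (ih (deleteVertex K v) hcard
        (isComplex_deleteVertex hK v) ?_ ?_ ?_)
      · rw [mem_deleteVertex_iff]
        exact ⟨hv₀, by simpa using hvv₀⟩
      · intro w hw
        exact hmin w (mem_deleteVertex_iff.1 hw).1
      · intro w hw hw0
        rw [mem_deleteVertex_iff] at hw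
        have hvw : v ≠ w := by
          intro h; subst h; exact hw.2 (Finset.mem_singleton_self v)
        obtain ⟨b, hgb, hdb⟩ := hdom w hw.1 hw0
        refine ⟨b, hgb, ?_⟩
        rw [sublevel_deleteVertex]
        by_cases hcmp : g w < g v
        · rwa [deleteVertex_sublevel_of_lt hcmp]
        · have hvb : v ≠ b := by
            intro h; subst h
            have : g w ≤ g v := hvmax w (by simp [hs, hw.1, hw0])
            linarith
          exact dominated_deleteVertex hdb hvw hvb


end mainaux

section part2aux
variable [DecidableEq V]

variable [DecidableEq V]

/-- The retraction pushing the `v`-coordinate onto `a`. -/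
def retr (v a : V) (f : V → ℝ) : V → ℝ :=
  fun w => if w = v then 0 else if w = a then f a + f v else f w

lemma continuous_retr (v a : V) : Continuous (retr (V := V) v a) := by
  apply continuous_pi
  intro w
  simp only [retr]
  split_ifs
  · exact continuous_const
  · exact (continuous_apply a).add (continuous_apply v)
  · exact continuous_apply w

lemma retr_eq_self {v a : V} (hav : a ≠ v) {f : V → ℝ} (hfv : f v = 0) :
    retr v a f = f := by
  funext w
  simp only [retr]
  split_ifs with h1 h2
  · rw [h1, hfv]
  · rw [h2, hfv, add_zero]
  · rfl

lemma retr_nonneg {v a : V} {f : V → ℝ} (hf : ∀ w, 0 ≤ f w) (w : V) :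
    0 ≤ retr v a f w := by
  simp only [retr]
  split_ifs
  · exact le_refl 0
  · exact add_nonneg (hf a) (hf v)
  · exact hf w

lemma sum_retr [Fintype V] {v a : V} (hav : a ≠ v) (f : V → ℝ) :
    ∑ w, retr v a f w = ∑ w, f w := by
  have key : ∀ w, retr v a f w
      = f w + f v * ((if w = a then (1:ℝ) else 0) - (if w = v then (1:ℝ) else 0)) := by
    intro w
    simp only [retr]
    by_cases h1 : w = v
    · subst h1
      rw [if_pos rfl, if_neg (Ne.symm hav), if_pos rfl]
      ring
    · rw [if_neg h1]
      by_cases h2 : w = a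
      · subst h2; rw [if_pos rfl, if_pos rfl, if_neg h1]; ring
      · rw [if_neg h2, if_neg h2, if_neg h1]; ring
  simp only [key]
  rw [Finset.sum_add_distrib]
  have h0 : ∑ w, f v * ((if w = a then (1:ℝ) else 0) - (if w = v then (1:ℝ) else 0)) = 0 := by
    rw [← Finset.mul_sum, Finset.sum_sub_distrib]
    simp [Finset.sum_ite_eq']
  rw [h0, add_zero]

/-- Key: inserting the dominating vertex keeps us in the complex. -/
lemma insert_apex_mem {K : Finset (Finset V)} {v a : V} (hK : IsComplex K)
    (hd : Dominated K v a) {σ : Finset V} (hσ : σ ∈ K) (hv : v ∈ σ) :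
    insert a σ ∈ K ∧ insert a (σ.erase v) ∈ K ∧ v ∉ insert a (σ.erase v) := by
  obtain ⟨hav, ha, hcone⟩ := hd
  rw [mem_link_iff] at ha
  by_cases h : σ.erase v = ∅
  · have hσv : σ = {v} := by
      rcases (Finset.erase_eq_empty_iff σ v).1 h with h' | h'
      · exact absurd (h' ▸ hv) (Finset.notMem_empty v)
      · exact h'
    subst hσv
    rw [h]
    have h1 : insert a ({v} : Finset V) = insert v ({a} : Finset V) := Finset.pair_comm a v
    refine ⟨h1 ▸ ha.2.2, ?_, ?_⟩
    · simpa using ha.1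
    · simp [Ne.symm hav, hav]
  · have hne : (σ.erase v).Nonempty := Finset.nonempty_iff_ne_empty.2 h
    have hτK : σ.erase v ∈ K := hK.2 σ hσ _ (Finset.erase_subset v σ) hne
    have hτl : σ.erase v ∈ link K v :=
      mem_link_iff.2 ⟨hτK, Finset.notMem_erase v σ, by rw [Finset.insert_erase hv]; exact hσ⟩
    have h2 := hcone _ hτl
    rw [mem_link_iff] at h2
    refine ⟨?_, h2.1, h2.2.1⟩
    have h3 : insert v (insert a (σ.erase v)) = insert a σ := by
      rw [Finset.insert_comm, Finset.insert_erase hv]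
    exact h3 ▸ h2.2.2

lemma supp_nonempty [Fintype V] {f : V → ℝ} (hf : ∑ w, f w = 1) :
    (Finset.univ.filter (fun w => f w ≠ 0)).Nonempty := by
  by_contra h
  rw [Finset.not_nonempty_iff_eq_empty, Finset.filter_eq_empty_iff] at h
  have : ∑ w, f w = 0 := Finset.sum_eq_zero (fun w _ => by
    have := h (Finset.mem_univ w); simpa using this)
  rw [this] at hf; exact one_ne_zero hf.symm

lemma retr_mem [Fintype V] {K : Finset (Finset V)} {v a : V} (hK : IsComplex K)
    (hd : Dominated K v a) {f : V → ℝ} (hf : f ∈ realization K) :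
    retr v a f ∈ realization (deleteVertex K v) := by
  obtain ⟨hpos, hsum, hsupp⟩ := hf
  have hav : a ≠ v := hd.1
  refine ⟨retr_nonneg hpos, by rw [sum_retr hav, hsum], ?_⟩
  by_cases hfv : f v = 0
  · rw [retr_eq_self hav hfv]
    rw [mem_deleteVertex_iff]
    refine ⟨hsupp, ?_⟩
    simp [hfv]
  · have hvσ : v ∈ Finset.univ.filter (fun w => f w ≠ 0) := by simp [hfv]
    obtain ⟨-, hins, hvins⟩ := insert_apex_mem hK hd hsupp hvσ
    have heq : Finset.univ.filter (fun w => retr v a f w ≠ 0)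
        = insert a ((Finset.univ.filter (fun w => f w ≠ 0)).erase v) := by
      ext w
      simp only [Finset.mem_filter, Finset.mem_univ, true_and, Finset.mem_insert,
        Finset.mem_erase]
      by_cases h1 : w = v
      · simp [retr, h1, Ne.symm hav]
      · by_cases h2 : w = a
        · have hra : retr v a f w ≠ 0 := by
            rw [h2]
            simp only [retr, if_neg hav, if_pos rfl, if_true]
            have h3 : 0 < f v := lt_of_le_of_ne (hpos v) (Ne.symm hfv)
            have h4 := hpos a
            intro h; linarith
          simp only [h2] at hra ⊢
          simp [hra]
        · simp [retr, h1, h2]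
    rw [heq, mem_deleteVertex_iff]
    exact ⟨hins, hvins⟩

lemma comb_mem [Fintype V] {K : Finset (Finset V)} {v a : V} (hK : IsComplex K)
    (hd : Dominated K v a) {f : V → ℝ} (hf : f ∈ realization K) {t : ℝ}
    (ht0 : 0 ≤ t) (ht1 : t ≤ 1) :
    t • f + (1 - t) • retr v a f ∈ realization K := by
  obtain ⟨hpos, hsum, hsupp⟩ := hf
  have hav : a ≠ v := hd.1
  by_cases hfv : f v = 0
  · have : t • f + (1 - t) • retr v a f = f := by
      rw [retr_eq_self hav hfv]
      funext w
      simp only [Pi.add_apply, Pi.smul_apply, smul_eq_mul]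
      ring
    rw [this]; exact ⟨hpos, hsum, hsupp⟩
  · have hvσ : v ∈ Finset.univ.filter (fun w => f w ≠ 0) := by simp [hfv]
    obtain ⟨hins, -, -⟩ := insert_apex_mem hK hd hsupp hvσ
    have hpos' : ∀ w, 0 ≤ (t • f + (1 - t) • retr v a f) w := by
      intro w
      simp only [Pi.add_apply, Pi.smul_apply, smul_eq_mul]
      have := retr_nonneg (v := v) (a := a) hpos w
      have := hpos w
      nlinarith
    have hsum' : ∑ w, (t • f + (1 - t) • retr v a f) w = 1 := by
      simp only [Pi.add_apply, Pi.smul_apply, smul_eq_mul]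
      rw [Finset.sum_add_distrib, ← Finset.mul_sum, ← Finset.mul_sum, sum_retr hav, hsum]
      ring
    refine ⟨hpos', hsum', ?_⟩
    have hsub : Finset.univ.filter (fun w => (t • f + (1 - t) • retr v a f) w ≠ 0)
        ⊆ insert a (Finset.univ.filter (fun w => f w ≠ 0)) := by
      intro w hw
      simp only [Finset.mem_filter, Finset.mem_univ, true_and] at hw
      rw [Finset.mem_insert, Finset.mem_filter]
      by_contra h
      push_neg at h
      obtain ⟨hwa, hwf⟩ := h
      have hfw : f w = 0 := by simpa using hwf (Finset.mem_univ w)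
      have hwv : w ≠ v := by rintro rfl; exact hfv hfw
      apply hw
      simp [Pi.add_apply, Pi.smul_apply, retr, hwv, hwa, hfw]
    exact hK.2 _ hins _ hsub (supp_nonempty hsum')


end part2aux

section htpy
variable [DecidableEq V]

lemma realization_mono [Fintype V] {K L : Finset (Finset V)} (h : L ⊆ K) :
    realization L ⊆ realization K := fun f hf => ⟨hf.1, hf.2.1, h hf.2.2⟩

lemma realization_deleteVertex_zero [Fintype V] {K : Finset (Finset V)} {v : V} {f : V → ℝ}
    (hf : f ∈ realization (deleteVertex K v)) : f v = 0 := by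
  by_contra h
  have hv : v ∈ Finset.univ.filter (fun w => f w ≠ 0) := by simp [h]
  exact (mem_deleteVertex_iff.1 hf.2.2).2 hv

noncomputable def phiMap [Fintype V] {K : Finset (Finset V)} {v a : V} (hK : IsComplex K)
    (hd : Dominated K v a) : C(↥(realization K), ↥(realization (deleteVertex K v))) :=
  ⟨fun f => ⟨retr v a f.1, retr_mem hK hd f.2⟩,
    Continuous.subtype_mk ((continuous_retr v a).comp continuous_subtype_val) _⟩

noncomputable def psiMap [Fintype V] {K : Finset (Finset V)} {v : V} :
    C(↥(realization (deleteVertex K v)), ↥(realization K)) :=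
  ⟨fun f => ⟨f.1, realization_mono (Finset.filter_subset _ _) f.2⟩,
    Continuous.subtype_mk continuous_subtype_val _⟩

lemma elemSC_homotopyEquiv [Fintype V] {K L : Finset (Finset V)} (hK : IsComplex K)
    (h : ElemSC K L) :
    Nonempty (ContinuousMap.HomotopyEquiv ↥(realization K) ↥(realization L)) := by
  obtain ⟨v, a, hvK, hd, rfl⟩ := h
  have hav : a ≠ v := hd.1
  refine ⟨⟨phiMap hK hd, psiMap, ⟨?_⟩, ?_⟩⟩
  · exact {
      toFun := fun p => ⟨(p.1 : ℝ) • (p.2.1 : V → ℝ) + (1 - (p.1 : ℝ)) • retr v a p.2.1,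
          comb_mem hK hd p.2.2 p.1.2.1 p.1.2.2⟩
      continuous_toFun := by
        apply Continuous.subtype_mk
        exact ((continuous_subtype_val.comp continuous_fst).smul
            (continuous_subtype_val.comp continuous_snd)).add
          ((continuous_const.sub (continuous_subtype_val.comp continuous_fst)).smul
            ((continuous_retr v a).comp (continuous_subtype_val.comp continuous_snd)))
      map_zero_left := fun x => by
        apply Subtype.ext
        show ((0 : unitInterval) : ℝ) • (x.1 : V → ℝ)
            + (1 - ((0 : unitInterval) : ℝ)) • retr v a x.1 = retr v a x.1
        simp
      map_one_left := fun x => by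
        apply Subtype.ext
        show ((1 : unitInterval) : ℝ) • (x.1 : V → ℝ)
            + (1 - ((1 : unitInterval) : ℝ)) • retr v a x.1 = (x.1 : V → ℝ)
        simp }
  · have heq : (phiMap hK hd).comp psiMap = ContinuousMap.id _ := by
      apply ContinuousMap.ext
      intro x
      apply Subtype.ext
      show retr v a x.1 = x.1
      exact retr_eq_self hav (realization_deleteVertex_zero x.2)
    rw [heq]

lemma isComplex_of_elemSC {K L : Finset (Finset V)} (hK : IsComplex K) (h : ElemSC K L) :
    IsComplex L := by
  obtain ⟨v, a, -, -, rfl⟩ := h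
  exact isComplex_deleteVertex hK v

lemma rtg_homotopyEquiv [Fintype V] {K L : Finset (Finset V)}
    (h : Relation.ReflTransGen (ElemSC (V := V)) K L) (hK : IsComplex K) :
    IsComplex L ∧
      Nonempty (ContinuousMap.HomotopyEquiv ↥(realization K) ↥(realization L)) := by
  induction h with
  | refl => exact ⟨hK, ⟨ContinuousMap.HomotopyEquiv.refl _⟩⟩
  | tail hKM hML ih =>
    obtain ⟨hM, ⟨e⟩⟩ := ih
    obtain ⟨e2⟩ := elemSC_homotopyEquiv hM hML
    exact ⟨isComplex_of_elemSC hM hML, ⟨e.trans e2⟩⟩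

noncomputable def homotopyEquiv_punit_of_subsingleton {X : Type*} [TopologicalSpace X] [Subsingleton X]
    (x₀ : X) : ContinuousMap.HomotopyEquiv X PUnit := by
  refine ⟨⟨fun _ => PUnit.unit, continuous_const⟩, ⟨fun _ => x₀, continuous_const⟩, ?_, ?_⟩
  · have h : (ContinuousMap.comp ⟨fun _ => x₀, continuous_const⟩
        ⟨fun _ => PUnit.unit, continuous_const⟩ : C(X, X)) = ContinuousMap.id X :=
      ContinuousMap.ext fun x => Subsingleton.elim _ _
    rw [h]
  · have h : (ContinuousMap.comp ⟨fun _ => PUnit.unit, continuous_const⟩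
        ⟨fun _ => x₀, continuous_const⟩ : C(PUnit, PUnit)) = ContinuousMap.id PUnit :=
      ContinuousMap.ext fun x => Subsingleton.elim _ _
    rw [h]

lemma point_homotopyEquiv [Fintype V] (v₀ : V) :
    Nonempty (ContinuousMap.HomotopyEquiv
      ↥(realization ({({v₀} : Finset V)} : Finset (Finset V))) PUnit) := by
  set A := realization ({({v₀} : Finset V)} : Finset (Finset V)) with hA
  have hδ : (fun w => if w = v₀ then (1 : ℝ) else 0) ∈ A := by
    refine ⟨fun w => by dsimp only; split_ifs <;> norm_num, ?_, ?_⟩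
    · simp [Finset.sum_ite_eq']
    · have hsupp : (Finset.univ.filter fun w => (if w = v₀ then (1 : ℝ) else 0) ≠ 0)
          = {v₀} := by
        ext w
        by_cases h : w = v₀ <;> simp [h]
      rw [hsupp]
      simp
  have hsub : A.Subsingleton := by
    have key : ∀ f ∈ A, f = fun w => if w = v₀ then (1 : ℝ) else 0 := by
      intro f hf
      obtain ⟨hpos, hsum, hsupp⟩ := hf
      have hsuppv : Finset.univ.filter (fun w => f w ≠ 0) = {v₀} :=
        Finset.mem_singleton.1 hsupp
      have hzero : ∀ w, w ≠ v₀ → f w = 0 := by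
        intro w hw
        by_contra h
        have hmem : w ∈ Finset.univ.filter (fun w => f w ≠ 0) := by simp [h]
        rw [hsuppv] at hmem
        exact hw (Finset.mem_singleton.1 hmem)
      have hone : f v₀ = 1 := (Fintype.sum_eq_single v₀ hzero).symm.trans hsum
      funext w
      by_cases h : w = v₀
      · subst h; simp [hone]
      · simp [h, hzero w h]
    intro f hf g hg
    rw [key f hf, key g hg]
  haveI : Subsingleton ↥A := ⟨fun x y => Subtype.ext (hsub x.2 y.2)⟩
  exact ⟨homotopyEquiv_punit_of_subsingleton ⟨_, hδ⟩⟩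

end htpy

/-- If every vertex of `K` except a single vertex `v₀` of minimal `g`-value is
descending dominated, then `K` strong collapses to the vertex `v₀`; in particular
`K` is homotopy equivalent to a point. -/
theorem unique_critical_implies_collapsible [Fintype V] [DecidableEq V]
    (K : Finset (Finset V)) (hK : IsComplex K) (g : V → ℝ) (v₀ : V)
    (hv₀ : ({v₀} : Finset V) ∈ K)
    (hmin : ∀ w, ({w} : Finset V) ∈ K → g v₀ ≤ g w)
    (hcrit : ¬ DescDom K g v₀)
    (hdom : ∀ v, ({v} : Finset V) ∈ K → v ≠ v₀ → DescDom K g v) :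
    Relation.ReflTransGen (ElemSC (V := V)) K {({v₀} : Finset V)} ∧
    Nonempty (ContinuousMap.HomotopyEquiv ↥(realization K) PUnit) := by
  have h1 := collapse_aux g v₀ K.card K le_rfl hK hv₀ hmin hdom
  refine ⟨h1, ?_⟩
  obtain ⟨-, ⟨e⟩⟩ := rtg_homotopyEquiv h1 hK
  obtain ⟨e2⟩ := point_homotopyEquiv v₀
  exact ⟨e.trans e2⟩
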